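/- arXiv:math/0103086 — 3 statements merged into one kernel-verified Lean document; each statement's English description precedes it below -/
import Mathlib

section
/- For every even integer N ≥ 2, the quadratic Gauss sum satisfies ∑_{p=0}^{N−1} exp(iπp²/N) = √N · exp(iπ/4). -/
/-!
Evaluate `θ(τ) = ∑ₙ exp(πi n² τ)` near the cusp `1/N` in two ways, with `τ = 1/N + it`, `t → 0⁺`.

Since `N` is even, `exp(πi n²/N)` has period `N` in `n`. Splitting `n` into residue classes mod `N`
and applying Poisson summation to each class (the functional equation of `evenKernel`) gives
`N √t θ(1/N + it) → ∑_{p<N} exp(πi p²/N)`.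

On the other hand `τ ↦ τ / (1 - Nτ)` is `S T^{-N} S`, which lies in the theta group, so
`θ(τ / (1 - Nτ)) = (1 - Nτ)^{1/2} θ(τ)`. At `τ = 1/N + it` we have `1 - Nτ = -iNt` and
`τ / (1 - Nτ) = -1/N + i/(N²t)`, where `θ → 1`; hence `N √t θ(1/N + it) → √N exp(πi/4)`.
-/

open Complex Finset Filter Topology HurwitzZeta

open Real in
lemma tendsto_jacobiTheta_comap_im_atTop : Tendsto jacobiTheta (comap im atTop) (𝓝 1) := by
  have hexp : Tendsto (fun τ : ℂ => rexp (-π * τ.im)) (comap im atTop) (𝓝 0) :=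
    tendsto_exp_atBot.comp <|
      (tendsto_const_mul_atBot_of_neg (neg_lt_zero.2 pi_pos)).2 tendsto_comap
  simpa using
    tendsto_sub_nhds_zero_iff.1 (isBigO_at_im_infty_jacobiTheta_sub_one.trans_tendsto hexp)

lemma tendsto_cosKernel_atTop (a : UnitAddCircle) : Tendsto (cosKernel a) atTop (𝓝 1) := by
  obtain ⟨p, hp, hO⟩ := isBigO_atTop_cosKernel_sub a
  have hexp : Tendsto (fun x : ℝ => Real.exp (-p * x)) atTop (𝓝 0) :=
    Real.tendsto_exp_atBot.comp <|
      (tendsto_const_mul_atBot_of_neg (neg_lt_zero.2 hp)).2 tendsto_id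
  simpa using tendsto_sub_nhds_zero_iff.1 (hO.trans_tendsto hexp)

lemma tendsto_sqrt_mul_evenKernel_nhdsGT_zero (a : UnitAddCircle) :
    Tendsto (fun x => √x * evenKernel a x) (𝓝[>] 0) (𝓝 1) := by
  refine ((tendsto_cosKernel_atTop a).comp tendsto_inv_nhdsGT_zero).congr' ?_
  filter_upwards [self_mem_nhdsWithin] with x (hx : 0 < x)
  rw [evenKernel_functional_equation, ← Real.sqrt_eq_rpow, one_div, one_div,
    mul_inv_cancel_left₀ (Real.sqrt_pos.2 hx).ne']
  rfl

lemma tendsto_const_mul_nhdsGT_zero {c : ℝ} (hc : 0 < c) :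
    Tendsto (fun t : ℝ => c * t) (𝓝[>] 0) (𝓝[>] 0) := by
  refine tendsto_nhdsWithin_iff.2 ⟨?_, ?_⟩
  · simpa using (tendsto_nhdsWithin_of_tendsto_nhds (continuous_const_mul c).continuousAt.tendsto :
      Tendsto (fun t : ℝ => c * t) (𝓝[>] 0) (𝓝 (c * 0)))
  · filter_upwards [self_mem_nhdsWithin] with t (ht : 0 < t)
    exact mul_pos hc ht

lemma mul_cpow_of_arg_add_mem {x y : ℂ} (hx : x ≠ 0) (hy : y ≠ 0)
    (h : arg x + arg y ∈ Set.Ioc (-Real.pi) Real.pi) (s : ℂ) :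
    (x * y) ^ s = x ^ s * y ^ s := by
  rw [cpow_def_of_ne_zero (mul_ne_zero hx hy), cpow_def_of_ne_zero hx, cpow_def_of_ne_zero hy,
    log_mul hx hy h, add_mul, Complex.exp_add]

lemma mul_cpow_of_re_pos {x y : ℂ} (hx : 0 < x.re) (hy : 0 < y.re) (s : ℂ) :
    (x * y) ^ s = x ^ s * y ^ s := by
  have hx₀ : x ≠ 0 := fun h => by simp [h] at hx
  have hy₀ : y ≠ 0 := fun h => by simp [h] at hy
  have hx_arg := abs_lt.1 (abs_arg_lt_pi_div_two_iff.2 (Or.inl hx))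
  have hy_arg := abs_lt.1 (abs_arg_lt_pi_div_two_iff.2 (Or.inl hy))
  exact mul_cpow_of_arg_add_mem hx₀ hy₀ ⟨by linarith, by linarith⟩ s

lemma cpow_one_half_ofReal_mul_neg_I {x : ℝ} (hx : 0 < x) :
    ((x : ℂ) * -I) ^ (1 / 2 : ℂ) = √x * cexp (-Real.pi * I / 4) := by
  have hx₀ : (x : ℂ) ≠ 0 := ofReal_ne_zero.2 hx.ne'
  have harg : arg x + arg (-I) ∈ Set.Ioc (-Real.pi) Real.pi := by
    rw [arg_ofReal_of_nonneg hx.le, arg_neg_I]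
    constructor <;> linarith [Real.pi_pos]
  rw [mul_cpow_of_arg_add_mem hx₀ (neg_ne_zero.2 I_ne_zero) harg,
    cpow_def_of_ne_zero (neg_ne_zero.2 I_ne_zero), log_neg_I, Real.sqrt_eq_rpow,
    ofReal_cpow hx.le]
  push_cast
  ring_nf

lemma jacobiTheta_neg_one_div {τ : ℂ} (hτ : 0 < τ.im) :
    jacobiTheta (-1 / τ) = (-I * τ) ^ (1 / 2 : ℂ) * jacobiTheta τ := by
  have h := jacobiTheta_S_smul ⟨τ, hτ⟩
  rw [UpperHalfPlane.modular_S_smul] at h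
  convert h using 2
  change -1 / τ = (-τ)⁻¹
  rw [neg_div, one_div, inv_neg]

lemma jacobiTheta_periodic : Function.Periodic jacobiTheta 2 := fun τ => by
  rw [add_comm]
  exact jacobiTheta_two_add τ

lemma jacobiTheta_div_one_sub_mul {N : ℤ} (hN : Even N) {τ : ℂ} (hτ : 0 < τ.im) :
    jacobiTheta (τ / (1 - N * τ)) = (1 - N * τ) ^ (1 / 2 : ℂ) * jacobiTheta τ := by
  obtain ⟨k, rfl⟩ := hN
  have hτ₀ : τ ≠ 0 := fun h => by simp [h] at hτ
  set w := -1 / τ + ((k + k : ℤ) : ℂ) with hw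
  have hw_im : 0 < w.im := by
    have : (-1 / τ).im = τ.im / normSq τ := by simp [div_eq_mul_inv, inv_im]
    simp only [hw, add_im, this, intCast_im, add_zero]
    exact div_pos hτ (normSq_pos.2 hτ₀)
  have hθw : jacobiTheta w = jacobiTheta (-1 / τ) := by
    rw [hw, ← two_mul, Int.cast_mul, Int.cast_two, mul_comm]
    exact jacobiTheta_periodic.int_mul k _
  have hprod : (-I * w) * (-I * τ) = 1 - ((k + k : ℤ) : ℂ) * τ := by
    rw [hw]
    field_simp
    ring_nf
    rw [I_sq]
    ring
  have hdiv : -1 / w = τ / (1 - ((k + k : ℤ) : ℂ) * τ) := by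
    rw [← hprod]
    field_simp
    ring_nf
    rw [I_sq]
    ring
  rw [← hdiv, jacobiTheta_neg_one_div hw_im, hθw, jacobiTheta_neg_one_div hτ, ← mul_assoc,
    ← mul_cpow_of_re_pos (by simpa using hw_im) (by simpa using hτ), hprod]

lemma periodic_exp_pi_mul_I_mul_sq_div {N : ℕ} (hN : Even N) :
    Function.Periodic (fun n : ℤ => cexp (Real.pi * I * (n : ℂ) ^ 2 / N)) N := by
  intro n
  rcases eq_or_ne N 0 with rfl | hN₀
  · simp
  obtain ⟨k, rfl⟩ := hN
  have hk : (k : ℂ) ≠ 0 := by exact_mod_cast (by omega : k ≠ 0)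
  have : Real.pi * I * (((n + (k + k : ℕ) : ℤ) : ℂ)) ^ 2 / (k + k : ℕ)
      = ((n + k : ℤ) : ℂ) * (2 * Real.pi * I) + Real.pi * I * (n : ℂ) ^ 2 / (k + k : ℕ) := by
    push_cast
    field_simp
    ring
  simp only [this, Complex.exp_add, exp_int_mul_two_pi_mul_I, one_mul]

lemma hasSum_mul_exp_neg_mul_sq_of_periodic {c : ℤ → ℂ} {m : ℕ} [NeZero m]
    (hc : Function.Periodic c m) {t : ℝ} (ht : 0 < t) :
    HasSum (fun n : ℤ => c n * Real.exp (-Real.pi * n ^ 2 * t))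
      (∑ r : Fin m, c r * evenKernel (r / m : ℝ) (m ^ 2 * t)) := by
  have hm : (m : ℝ) ≠ 0 := NeZero.ne _
  let e : Fin m × ℤ ≃ ℤ := (Equiv.prodComm _ _).trans (Int.divModEquiv m).symm
  have hfiber (r : Fin m) : HasSum
      (fun q : ℤ => c (e (r, q)) * Real.exp (-Real.pi * e (r, q) ^ 2 * t))
      (c r * evenKernel (r / m : ℝ) (m ^ 2 * t)) := by
    refine ((hasSum_ofReal.2 (hasSum_int_evenKernel (r / m : ℝ) (by positivity))).mul_left
      (c r)).congr_fun fun q => ?_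
    have hcq : c (e (r, q)) = c r := by simpa [e, add_comm] using hc.int_mul q r
    rw [hcq]
    congr 3
    simp [e]
    field_simp
  have hsingle (r : Fin m) : HasSum
      (fun p : Fin m × ℤ => if p.1 = r then c (e p) * Real.exp (-Real.pi * e p ^ 2 * t) else 0)
      (c r * evenKernel (r / m : ℝ) (m ^ 2 * t)) := by
    rw [← (Prod.mk_right_injective r).hasSum_iff]
    · exact (hfiber r).congr_fun fun q => if_pos rfl
    · rintro ⟨r', q⟩ hp
      exact if_neg fun h => hp ⟨q, by simp_all⟩
  rw [← e.hasSum_iff]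
  refine (hasSum_sum (s := univ) fun r _ => hsingle r).congr_fun fun p => ?_
  simp

lemma jacobiTheta_one_div_add_mul_I {N : ℕ} [NeZero N] (hN : Even N) {t : ℝ} (ht : 0 < t) :
    jacobiTheta (1 / N + t * I) = ∑ r : Fin N,
      cexp (Real.pi * I * (r : ℂ) ^ 2 / N) * evenKernel (r / N : ℝ) (N ^ 2 * t) := by
  have hτ : 0 < (1 / N + t * I : ℂ).im := by simpa using ht
  have hsum := hasSum_mul_exp_neg_mul_sq_of_periodic (periodic_exp_pi_mul_I_mul_sq_div hN) ht
  simp only [Int.cast_natCast] at hsum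
  rw [jacobiTheta_eq_jacobiTheta₂]
  refine ((hasSum_jacobiTheta₂_term 0 hτ).congr_fun fun n => ?_).unique hsum
  rw [jacobiTheta₂_term, ofReal_exp, ← Complex.exp_add]
  push_cast
  ring_nf
  rw [I_sq]
  ring_nf

lemma tendsto_mul_sqrt_mul_jacobiTheta_one_div_add_mul_I_gaussSum {N : ℕ} [NeZero N]
    (hN : Even N) :
    Tendsto (fun t : ℝ => N * √t * jacobiTheta (1 / N + t * I)) (𝓝[>] 0)
      (𝓝 (∑ r : Fin N, cexp (Real.pi * I * (r : ℂ) ^ 2 / N))) := by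
  have hN₀ : (0 : ℝ) < N := Nat.cast_pos.2 (Nat.pos_of_neZero N)
  have hscale := tendsto_const_mul_nhdsGT_zero (pow_pos hN₀ 2)
  have hlim (r : Fin N) := (continuous_ofReal.tendsto 1).comp
    ((tendsto_sqrt_mul_evenKernel_nhdsGT_zero (r / N : ℝ)).comp hscale)
  have hsum := tendsto_finsetSum univ fun r _ =>
    (hlim r).const_mul (cexp (Real.pi * I * (r : ℂ) ^ 2 / N))
  simp only [ofReal_one, mul_one] at hsum
  refine hsum.congr' ?_
  filter_upwards [self_mem_nhdsWithin] with t (ht : 0 < t)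
  rw [jacobiTheta_one_div_add_mul_I hN ht, mul_sum]
  refine sum_congr rfl fun r _ => ?_
  simp only [Function.comp_apply, ofReal_mul, Real.sqrt_mul (sq_nonneg _), Real.sqrt_sq hN₀.le]
  push_cast
  ring

lemma tendsto_mul_sqrt_mul_jacobiTheta_one_div_add_mul_I_modular {N : ℕ} [NeZero N]
    (hN : Even N) :
    Tendsto (fun t : ℝ => N * √t * jacobiTheta (1 / N + t * I)) (𝓝[>] 0)
      (𝓝 (√N * cexp (Real.pi * I / 4))) := by
  have hN₀ : (0 : ℝ) < N := Nat.cast_pos.2 (Nat.pos_of_neZero N)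
  have hNC : (N : ℂ) ≠ 0 := NeZero.ne _
  have hcusp : Tendsto (fun t : ℝ => -1 / N + I / (N ^ 2 * t)) (𝓝[>] 0) (comap im atTop) := by
    refine tendsto_comap_iff.2 ((tendsto_inv_nhdsGT_zero.comp
      (tendsto_const_mul_nhdsGT_zero (pow_pos hN₀ 2))).congr fun t => ?_)
    have : -1 / N + I / (N ^ 2 * t) = ((-1 / N : ℝ) : ℂ) + ((N ^ 2 * t)⁻¹ : ℝ) * I := by
      push_cast
      ring
    rw [Function.comp_apply, Function.comp_apply, this, add_im, ofReal_im, mul_I_im, ofReal_re,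
      zero_add]
  have hθ := (tendsto_jacobiTheta_comap_im_atTop.comp hcusp).const_mul
    (√N * cexp (Real.pi * I / 4))
  rw [mul_one] at hθ
  refine hθ.congr' ?_
  filter_upwards [self_mem_nhdsWithin] with t (ht : 0 < t)
  have hτ : 0 < (1 / N + t * I : ℂ).im := by simpa using ht
  have h := jacobiTheta_div_one_sub_mul (N := N) (by exact_mod_cast hN) hτ
  have h₁ : 1 - ((N : ℤ) : ℂ) * (1 / N + t * I) = ((N * t : ℝ) : ℂ) * -I := by
    push_cast
    field_simp
    ring
  have h₂ : (1 / N + t * I) / (1 - ((N : ℤ) : ℂ) * (1 / N + t * I))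
      = -1 / N + I / (N ^ 2 * t) := by
    have ht' : (t : ℂ) ≠ 0 := ofReal_ne_zero.2 ht.ne'
    rw [h₁]
    push_cast
    field_simp
    ring_nf
    rw [I_sq]
    ring
  rw [h₂, h₁, cpow_one_half_ofReal_mul_neg_I (by positivity), Real.sqrt_mul hN₀.le,
    ofReal_mul] at h
  have hexp : cexp (Real.pi * I / 4) * cexp (-Real.pi * I / 4) = 1 := by
    rw [← Complex.exp_add, ← Complex.exp_zero]
    ring_nf
  have hN_sq : (N : ℂ) = √N * √N := by
    rw [← ofReal_mul, Real.mul_self_sqrt hN₀.le, ofReal_natCast]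
  rw [Function.comp_apply, h]
  linear_combination (√N * √N * √t * jacobiTheta (1 / N + t * I) : ℂ) * hexp
    - (√t * jacobiTheta (1 / N + t * I) : ℂ) * hN_sq

theorem gauss_sum_even_general (N : ℕ) (hNe : Even N) :
    ∑ p ∈ Finset.range N,
        Complex.exp (Real.pi * Complex.I * (p : ℂ) ^ 2 / (N : ℂ))
      = (Real.sqrt N : ℂ) * Complex.exp (Real.pi * Complex.I / 4) := by
  obtain rfl | hN := eq_or_ne N 0
  · simp
  have : NeZero N := ⟨hN⟩
  rw [← Fin.sum_univ_eq_sum_range (fun p => cexp (Real.pi * I * (p : ℂ) ^ 2 / N))]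
  exact tendsto_nhds_unique (tendsto_mul_sqrt_mul_jacobiTheta_one_div_add_mul_I_gaussSum hNe)
    (tendsto_mul_sqrt_mul_jacobiTheta_one_div_add_mul_I_modular hNe)

/-- For every even integer `N ≥ 2`, the quadratic Gauss sum satisfies
`∑_{p=0}^{N-1} exp(iπp²/N) = √N · exp(iπ/4)`. -/
theorem gauss_sum_even (N : ℕ) (hN : 2 ≤ N) (hNe : Even N) :
    ∑ p ∈ Finset.range N,
        Complex.exp (Real.pi * Complex.I * (p : ℂ) ^ 2 / (N : ℂ))
      = (Real.sqrt N : ℂ) * Complex.exp (Real.pi * Complex.I / 4) :=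
  gauss_sum_even_general N hNe
end

section
/- Let N ≥ 2 be an even integer, Γ = {exp(2πik/N)·r : k ∈ ℤ, r ∈ ℝ, r > 0} ⊆ ℂ, and let μ be a nonzero complex number with μ ∉ Γ. Let H be a complex Hilbert space and U a unitary bounded operator on H with U^N = 1. Then the bounded operator conj(μ)·U² − μ·1 is invertible, and its inverse can be written as a₀·1 + a₁·U + a₂·U² + … + a_{N−1}·U^{N−1} for some complex coefficients a₀, …, a_{N−1}. -/
/-!
Put `β = conj μ`, `γ = μ` and `V = U²`, so that `V ^ (N / 2) = 1`. For any `x` with `x ^ n = 1`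
and scalars with `β ^ n ≠ γ ^ n`, the factorisation
`(β x - γ) ∑_{i<n} (β x)^i γ^(n-1-i) = β^n x^n - γ^n = β^n - γ^n` exhibits a two-sided inverse
of `β x - γ` that is a polynomial of degree `< n` in `x`; in `U` it involves only even powers
below `N`. The condition `conj μ ^ (N/2) ≠ μ ^ (N/2)` is exactly `μ ∉ Γ`: otherwise
`(μ / |μ|) ^ N = μ^(N/2) μ^(N/2) / (μ conj μ)^(N/2) = 1`, so `μ / |μ|` is an `N`-th root of unity.
-/

open Complex ComplexConjugate Finset

section CyclicInverse

variable {𝕜 A : Type*} [Field 𝕜] [Ring A] [Algebra 𝕜 A] {x : A} {n : ℕ} {a b : 𝕜}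

def cyclicInvCoeff (a b : 𝕜) (n i : ℕ) : 𝕜 := (a ^ n - b ^ n)⁻¹ * (a ^ i * b ^ (n - 1 - i))

lemma sum_cyclicInvCoeff_smul_pow (a b : 𝕜) (n : ℕ) (x : A) :
    ∑ i ∈ range n, cyclicInvCoeff a b n i • x ^ i =
      (a ^ n - b ^ n)⁻¹ • ∑ i ∈ range n, (a • x) ^ i * (b • 1 : A) ^ (n - 1 - i) := by
  simp only [cyclicInvCoeff, smul_sum, smul_pow, one_pow, smul_mul_smul_comm, mul_one, smul_smul]

lemma smul_sub_smul_one_mul_sum_cyclicInvCoeff (hx : x ^ n = 1) (hab : a ^ n ≠ b ^ n) :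
    (a • x - b • 1) * ∑ i ∈ range n, cyclicInvCoeff a b n i • x ^ i = 1 := by
  rw [sum_cyclicInvCoeff_smul_pow, mul_smul_comm,
    ((Commute.one_right x).smul_left a |>.smul_right b).mul_geom_sum₂, smul_pow, smul_pow, hx,
    one_pow, ← sub_smul, inv_smul_smul₀ (sub_ne_zero.mpr hab)]

lemma sum_cyclicInvCoeff_mul_smul_sub_smul_one (hx : x ^ n = 1) (hab : a ^ n ≠ b ^ n) :
    (∑ i ∈ range n, cyclicInvCoeff a b n i • x ^ i) * (a • x - b • 1) = 1 := by
  rw [sum_cyclicInvCoeff_smul_pow, smul_mul_assoc,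
    ((Commute.one_right x).smul_left a |>.smul_right b).geom_sum₂_mul, smul_pow, smul_pow, hx,
    one_pow, ← sub_smul, inv_smul_smul₀ (sub_ne_zero.mpr hab)]

end CyclicInverse

lemma sum_range_smul_sq_pow_eq_sum_fin {R A : Type*} [Semiring R] [Semiring A] [Module R A]
    (c : ℕ → R) (u : A) (M : ℕ) :
    ∑ i ∈ range M, c i • (u ^ 2) ^ i =
      ∑ j : Fin (2 * M), (if Even (j : ℕ) then c (j / 2) else 0) • u ^ (j : ℕ) := by
  rw [Fin.sum_univ_eq_sum_range (fun j => (if Even j then c (j / 2) else 0) • u ^ j)]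
  refine sum_of_injOn (2 * ·) (fun i _ j _ h => by simpa using h) (fun i hi => by simp_all)
    (fun j hj hnot => ?_) (fun i _ => by simp [pow_mul])
  obtain ⟨i, rfl⟩ | hodd := em (Even j)
  · refine absurd ⟨i, ?_, by simp [two_mul]⟩ hnot
    simp only [mem_range] at hj
    simp only [coe_range, Set.mem_Iio]
    omega
  · simp [hodd]

lemma Complex.div_norm_pow_eq_one_of_conj_pow_eq {z : ℂ} (hz : z ≠ 0) {M : ℕ}
    (h : conj z ^ M = z ^ M) : (z / ‖z‖) ^ (2 * M) = 1 := by
  have hnorm : (‖z‖ : ℂ) ^ (2 * M) = z ^ (2 * M) := by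
    rw [pow_mul, ← mul_conj', mul_pow, h, ← pow_two, ← pow_mul, mul_comm]
  rw [div_pow, hnorm, div_self (pow_ne_zero _ hz)]

lemma Complex.exists_eq_exp_mul_ofReal_of_div_norm_pow_eq_one {N : ℕ} (hN : N ≠ 0) {z : ℂ}
    (hz : z ≠ 0) (h : (z / ‖z‖) ^ N = 1) :
    ∃ (k : ℤ) (r : ℝ), 0 < r ∧ z = exp (2 * Real.pi * I * k / N) * r := by
  have : NeZero N := ⟨hN⟩
  obtain ⟨k, -, hk⟩ := (isPrimitiveRoot_exp N hN).eq_pow_of_pow_eq_one h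
  refine ⟨k, ‖z‖, norm_pos_iff.mpr hz, ?_⟩
  have hexp : exp (2 * Real.pi * I * (k : ℤ) / N) = z / ‖z‖ := by
    rw [← hk, ← exp_nat_mul]
    congr 1
    push_cast
    ring
  rw [hexp, div_mul_cancel₀ _ (by simpa using hz)]

theorem conj_mu_U_sq_sub_mu_invertible_general
    {H : Type*} [NormedAddCommGroup H] [InnerProductSpace ℂ H]
    (N : ℕ) (hN : 2 ≤ N) (hNe : Even N) (μ : ℂ) (hμ : μ ≠ 0)
    (hμΓ : μ ∉ {z : ℂ | ∃ (k : ℤ) (r : ℝ), 0 < r ∧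
      z = Complex.exp (2 * Real.pi * Complex.I * (k : ℂ) / (N : ℂ)) * (r : ℂ)})
    (U : H →L[ℂ] H) (hUN : U ^ N = 1) :
    IsUnit ((starRingEnd ℂ) μ • U ^ 2 - μ • (1 : H →L[ℂ] H)) ∧
      ∃ a : Fin N → ℂ,
        ((starRingEnd ℂ) μ • U ^ 2 - μ • (1 : H →L[ℂ] H)) *
            (∑ j : Fin N, a j • U ^ (j : ℕ)) = 1 ∧
          (∑ j : Fin N, a j • U ^ (j : ℕ)) *
            ((starRingEnd ℂ) μ • U ^ 2 - μ • (1 : H →L[ℂ] H)) = 1 := by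
  obtain ⟨M, rfl⟩ := even_iff_two_dvd.mp hNe
  have hpow : conj μ ^ M ≠ μ ^ M := fun h => hμΓ <|
    exists_eq_exp_mul_ofReal_of_div_norm_pow_eq_one (by omega) hμ
      (div_norm_pow_eq_one_of_conj_pow_eq hμ h)
  have hU2 : (U ^ 2) ^ M = 1 := by rw [← pow_mul, hUN]
  have hright := smul_sub_smul_one_mul_sum_cyclicInvCoeff hU2 hpow
  have hleft := sum_cyclicInvCoeff_mul_smul_sub_smul_one hU2 hpow
  rw [sum_range_smul_sq_pow_eq_sum_fin] at hright hleft
  exact ⟨⟨⟨_, _, hright, hleft⟩, rfl⟩, _, hright, hleft⟩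

/-- Let `N ≥ 2` be an even integer, `Γ` the union of the open rays through the `N`-th roots
of unity, and `μ ≠ 0` with `μ ∉ Γ`. If `U` is a unitary operator on a complex Hilbert space
`H` with `U^N = 1`, then `conj(μ)·U² − μ·1` is invertible and its inverse is a polynomial
`a₀·1 + a₁·U + ⋯ + a_{N−1}·U^{N−1}` in `U`. -/
theorem conj_mu_U_sq_sub_mu_invertible
    {H : Type*} [NormedAddCommGroup H] [InnerProductSpace ℂ H] [CompleteSpace H]
    (N : ℕ) (hN : 2 ≤ N) (hNe : Even N) (μ : ℂ) (hμ : μ ≠ 0)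
    (hμΓ : μ ∉ {z : ℂ | ∃ (k : ℤ) (r : ℝ), 0 < r ∧
      z = Complex.exp (2 * Real.pi * Complex.I * (k : ℂ) / (N : ℂ)) * (r : ℂ)})
    (U : H →L[ℂ] H) (hU : U ∈ unitary (H →L[ℂ] H)) (hUN : U ^ N = 1) :
    IsUnit ((starRingEnd ℂ) μ • U ^ 2 - μ • (1 : H →L[ℂ] H)) ∧
      ∃ a : Fin N → ℂ,
        ((starRingEnd ℂ) μ • U ^ 2 - μ • (1 : H →L[ℂ] H)) *
            (∑ j : Fin N, a j • U ^ (j : ℕ)) = 1 ∧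
          (∑ j : Fin N, a j • U ^ (j : ℕ)) *
            ((starRingEnd ℂ) μ • U ^ 2 - μ • (1 : H →L[ℂ] H)) = 1 :=
  conj_mu_U_sq_sub_mu_invertible_general N hN hNe μ hμ hμΓ U hUN
end

section
/- Let N ≥ 2 be an even integer and q = exp(2πi/N). On ℂ^N with coordinates indexed by j ∈ {0, 1, …, N−1} (indices taken modulo N), let U be the 'clock' operator (Ux)_j = q^j x_j, let V be the cyclic shift (Vx)_j = x_{j+1 mod N}, and set T = e^{−iπ/N}·V^*·U, i.e. (Tx)_j = e^{−iπ/N} q^{j−1} x_{j−1 mod N}. For m ∈ {0, 1, …, N−1} define g_m ∈ ℂ^N by (g_m)_p = exp((iπ/N)(p² − 2p(m+1))). Then T g_m = q^m g_m, i.e. g_m is an eigenvector of T with eigenvalue q^m. -/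
open Complex

/-- The operator `T = e^{−iπ/N}·V*·U` on `ℂ^N`, where `U` is the clock operator
`(Ux)_j = q^j x_j` and `V*` the inverse cyclic shift; explicitly
`(Tx)_j = e^{−iπ/N} q^{j−1} x_{j−1 mod N}`. -/
noncomputable def clockShiftT (N : ℕ) [NeZero N] (x : Fin N → ℂ) : Fin N → ℂ := fun j =>
  Complex.exp (-(Real.pi * Complex.I) / N) *
    Complex.exp (2 * Real.pi * Complex.I / N) ^ (((j - 1 : Fin N) : ℕ)) * x (j - 1)

/-- The vector `g_m ∈ ℂ^N` with `(g_m)_p = exp((iπ/N)(p² − 2p(m+1)))`. -/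
noncomputable def gVec (N : ℕ) (m : Fin N) : Fin N → ℂ := fun p =>
  Complex.exp (Real.pi * Complex.I / N *
    (((p : ℕ) : ℂ) ^ 2 - 2 * ((p : ℕ) : ℂ) * (((m : ℕ) : ℂ) + 1)))

/-- For even `N ≥ 2` and `q = exp(2πi/N)`, the vector `g_m` is an eigenvector of
`T = e^{−iπ/N}·V*·U` with eigenvalue `q^m`: `T g_m = q^m g_m`. -/
theorem clockShiftT_eigenvector (N : ℕ) [NeZero N] (hN : 2 ≤ N) (hNe : Even N) (m : Fin N) :
    clockShiftT N (gVec N m)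
      = fun j => Complex.exp (2 * Real.pi * Complex.I / N) ^ ((m : ℕ)) * gVec N m j := by
  obtain ⟨n, rfl⟩ : ∃ n, N = n + 1 := ⟨N - 1, by omega⟩
  funext j
  simp only [clockShiftT, gVec]
  rw [← Complex.exp_nat_mul, ← Complex.exp_nat_mul, ← Complex.exp_add, ← Complex.exp_add,
    ← Complex.exp_add]
  have hN0 : ((n + 1 : ℕ) : ℂ) ≠ 0 := Nat.cast_ne_zero.mpr (by omega)
  rw [Complex.exp_eq_exp_iff_exists_int]
  rcases eq_or_ne j 0 with hj | hj
  · -- j = 0 : wrap-around case, use evenness of N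
    obtain ⟨k, hk⟩ := hNe
    have ha : ((j - 1 : Fin (n + 1)) : ℕ) = n := by
      subst hj
      rw [Fin.coe_sub_one]
      simp
    have hj0 : ((j : ℕ) : ℂ) = 0 := by rw [hj]; simp
    refine ⟨(k : ℤ) - 1 - (m : ℕ), ?_⟩
    have hnval : ((n : ℕ) : ℂ) = 2 * (k : ℂ) - 1 := by
      have : n = 2 * k - 1 := by omega
      rw [this]
      push_cast [show (1:ℕ) ≤ 2 * k by omega]
      ring
    rw [ha, hj0, hnval]
    have hNk : ((n + 1 : ℕ) : ℂ) = 2 * (k : ℂ) := by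
      push_cast; rw [hnval]; ring
    have hk0 : (k : ℂ) ≠ 0 := by
      have : k ≠ 0 := by omega
      exact_mod_cast Nat.cast_ne_zero.mpr this
    rw [hNk]
    push_cast
    field_simp
    ring
  · -- j ≠ 0 : exponents agree exactly
    refine ⟨0, ?_⟩
    have ha : ((j - 1 : Fin (n + 1)) : ℕ) = (j : ℕ) - 1 := by
      rw [Fin.coe_sub_one, if_neg hj]
    have hjpos : 1 ≤ (j : ℕ) := by
      rcases Nat.pos_of_ne_zero (fun h => hj (Fin.ext h)) with h
      omega
    have hjc : ((j : ℕ) : ℂ) = (((j : ℕ) - 1 : ℕ) : ℂ) + 1 := by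
      push_cast [hjpos]; ring
    rw [ha, hjc]
    push_cast
    field_simp
    ring
end
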